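/- arXiv:2409.04288 — 2 statements merged into one kernel-verified Lean document; each statement's English description precedes it below -/
import Mathlib

section
/- For polynomials over the rationals, the transformation I defined by I(p)(t) = (t·p(-t-1) + p(0))/(t+1) is well-defined (i.e., t·p(-t-1) + p(0) is divisible by t+1) and is an involution: I(I(p)) = p for every polynomial p. -/
open Polynomial

/-- Aluffi's transformation `I(p)(t) = (t·p(-t-1) + p(0))/(t+1)` is well-defined
(the numerator is divisible by `t+1`) and is an involution. -/
theorem aluffi_involution :
    (∀ p : ℚ[X], (X + 1) ∣ (X * p.comp (-X - 1) + C (p.eval 0))) ∧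
    (∀ p q r : ℚ[X],
      (X + 1) * q = X * p.comp (-X - 1) + C (p.eval 0) →
      (X + 1) * r = X * q.comp (-X - 1) + C (q.eval 0) →
      r = p) := by
  constructor
  · intro p
    have : (X + 1 : ℚ[X]) = X - C (-1) := by ring_nf; rw [map_neg, map_one]; ring
    rw [this, dvd_iff_isRoot]
    simp [IsRoot, eval_comp]
  · intro p q r h1 h2
    have hcomp : ((-X - 1 : ℚ[X]).comp (-X - 1)) = X := by
      simp [sub_comp]
    have h1' := congrArg (fun f : ℚ[X] => f.comp (-X - 1)) h1
    simp only [mul_comp, add_comp, X_comp, C_comp, one_comp, comp_assoc, hcomp, comp_X] at h1'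
    -- h1' : (-X - 1 + 1) * q.comp (-X-1) = (-X - 1) * p + C (p.eval 0)
    have hq : X * q.comp (-X - 1) = (X + 1) * p - C (p.eval 0) := by
      have := h1'
      linear_combination -this
    have hq0 : q.eval 0 = p.eval 0 := by
      have := congrArg (fun f : ℚ[X] => f.eval 0) h1
      simpa using this
    have : (X + 1 : ℚ[X]) * r = (X + 1) * p := by
      rw [h2, hq, hq0]; ring
    have hX : (X + 1 : ℚ[X]) ≠ 0 := by
      intro h
      have := congrArg (fun f : ℚ[X] => f.eval 0) h
      simp at this
    exact mul_left_cancel₀ hX this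
end

section
/- For every polynomial p ∈ ℚ[t] of degree at most N, the polynomial I(p) defined by (t+1)·I(p)(t) = t·p(-t-1) + p(0) also has degree at most N, and I(p)(0) = p(0) and for all t, (t+1)·I(p)(t) - t·p(-t-1) - p(0) = 0. -/
open Polynomial

/-- Aluffi's transformation `I(p)(t) = (t·p(-t-1) + p(0))/(t+1)`: the numerator is
divisible by `t+1`, and for `q = I(p)` one has `q(0) = p(0)` and `deg q ≤ deg p ≤ N`. -/
theorem aluffi_transformation_properties (N : ℕ) (p : ℚ[X]) (hp : p.degree ≤ N) :
    (X + 1) ∣ (X * p.comp (-X - 1) + C (p.eval 0)) ∧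
    ∀ q : ℚ[X], (X + 1) * q = X * p.comp (-X - 1) + C (p.eval 0) →
      q.eval 0 = p.eval 0 ∧ q.degree ≤ N := by
  have hX1 : (X + 1 : ℚ[X]) = X - C (-1) := by rw [map_neg, C_1, sub_neg_eq_add]
  constructor
  · rw [hX1, dvd_iff_isRoot]
    simp [IsRoot, eval_comp]
  · intro q hq
    have h0 : q.eval 0 = p.eval 0 := by
      have := congrArg (eval 0) hq
      simpa using this
    refine ⟨h0, ?_⟩
    rcases eq_or_ne q 0 with rfl | hq0
    · simp
    have hdeg1 : ((X : ℚ[X]) + 1).degree = 1 := by compute_degree!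
    have hcomp : (p.comp (-X - 1)).degree ≤ N := by
      rcases eq_or_ne p 0 with rfl | hp0
      · simp
      have hc0 : p.comp (-X - 1) ≠ 0 := fun h => hp0 (by
        have := congrArg natDegree h
        rw [natDegree_comp] at this
        have hn1 : (-X - 1 : ℚ[X]).natDegree = 1 := by compute_degree!
        rw [hn1, mul_one, natDegree_zero] at this
        by_contra hne
        -- p.natDegree = 0 means p is constant; then p.comp = C (p.coeff 0) = 0 → p = 0
        have := Polynomial.eq_C_of_natDegree_eq_zero this
        nth_rewrite 1 [this] at h
        rw [C_comp] at h
        exact hne (by rw [this, h]))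
      rw [degree_eq_natDegree hc0, natDegree_comp]
      have hn1 : (-X - 1 : ℚ[X]).natDegree = 1 := by compute_degree!
      rw [hn1, mul_one, ← degree_eq_natDegree (fun h => hc0 (by simp [h]))]
      exact hp
    have hdq : (1 : WithBot ℕ) + q.degree ≤ 1 + N := by
      have hmul : ((X + 1 : ℚ[X]) * q).degree ≤ 1 + N := by
        rw [hq]
        apply le_trans (degree_add_le _ _)
        apply max_le
        · apply le_trans (degree_mul_le _ _)
          rw [degree_X]
          exact add_le_add le_rfl hcomp
        · exact le_trans degree_C_le (le_trans zero_le_one (le_add_of_nonneg_right (by exact_mod_cast N.zero_le)))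
      rwa [degree_mul, hdeg1] at hmul
    rw [degree_eq_natDegree hq0] at hdq ⊢
    have : ((1 + q.natDegree : ℕ) : WithBot ℕ) ≤ ((1 + N : ℕ) : WithBot ℕ) := by
      push_cast
      exact_mod_cast hdq
    have hnat : 1 + q.natDegree ≤ 1 + N := by exact_mod_cast this
    exact_mod_cast Nat.le_of_add_le_add_left hnat
end
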